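/- Let A and B be commuting bounded linear operators on a complex Hilbert space H such that N(A) ⊆ N(A*) and both R(A) and R(B) are closed. Since AB = BA and N(A) ⊆ N(A*), the subspace H₂ := N(A) is invariant under B; set H₁ = N(A)⊥ and let B' = P₁ ∘ B restricted to H₁, Y = P₂ ∘ B restricted to H₁, and Z = B restricted to H₂, where P₁, P₂ are the orthogonal projections onto H₁, H₂. If Y*(N(Z*)) ⊆ R(B'*), then R(AB) is closed. -/

import Mathlib

/-!
Write `N = ker A`. Since `A` vanishes on `N` and `B` maps `N` into itself, `R(AB)` is the image of
`R(B')` under `A` restricted to `Nᗮ`; that restriction is injective with closed range, hence a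
closed map, so it suffices that `R(B')`, or equivalently `R(B'*)`, is closed. With respect to
`H = Nᗮ ⊕ N` the adjoint `B*` is upper triangular: it acts as `B'*` on `Nᗮ` and sends `v ∈ N` to
`Y* v + Z* v`. So a vector `B* (u + v)` lies in `Nᗮ` exactly when `Z* v = 0`, and then the
hypothesis `Y*(N(Z*)) ⊆ R(B'*)` puts it in `R(B'*)`. Hence `R(B'*) = R(B*) ∩ Nᗮ`, which is closed
by the closed range theorem applied to `B`.
-/

open ContinuousLinearMap Submodule Function
open scoped InnerProduct

namespace ContinuousLinearMap

variable {𝕜 E F G : Type*} [RCLike 𝕜] [NormedAddCommGroup E] [InnerProductSpace 𝕜 E]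
  [NormedAddCommGroup F] [InnerProductSpace 𝕜 F] [NormedAddCommGroup G] [NormedSpace 𝕜 G]

theorem comp_starProjection_of_orthogonal_le_ker {K : Submodule 𝕜 E} [K.HasOrthogonalProjection]
    {T : E →L[𝕜] G} (hK : Kᗮ ≤ T.ker) : T ∘L K.starProjection = T := by
  ext x
  have : T (x - K.starProjection x) = 0 := hK (K.sub_starProjection_mem_orthogonal x)
  rw [map_sub, sub_eq_zero] at this
  exact this.symm

theorem range_comp_subtypeL_of_orthogonal_le_ker {K : Submodule 𝕜 E} [K.HasOrthogonalProjection]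
    {T : E →L[𝕜] G} (hK : Kᗮ ≤ T.ker) : Set.range (T ∘L K.subtypeL) = Set.range T := by
  rw [coe_comp]
  refine (Set.range_comp_subset_range _ _).antisymm ?_
  rintro _ ⟨x, rfl⟩
  exact ⟨K.orthogonalProjectionOnto x,
    DFunLike.congr_fun (comp_starProjection_of_orthogonal_le_ker hK) x⟩

theorem injective_comp_subtypeL_orthogonal_ker (T : E →L[𝕜] G) :
    Injective (T ∘L T.kerᗮ.subtypeL) := by
  refine (injective_iff_map_eq_zero _).2 fun x hx => ?_
  exact Subtype.ext <| T.ker.orthogonal_disjoint.le_bot ⟨hx, x.2⟩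

variable [CompleteSpace E]

theorem isClosedMap_comp_subtypeL_orthogonal_ker [CompleteSpace G] {T : E →L[𝕜] G}
    (hT : IsClosed (Set.range T)) : IsClosedMap (T ∘L T.kerᗮ.subtypeL) := by
  have hrange := range_comp_subtypeL_of_orthogonal_le_ker T.ker.orthogonal_orthogonal.le
  obtain ⟨c, hc⟩ := antilipschitz_of_injective_of_isClosed_range _
    (injective_comp_subtypeL_orthogonal_ker T) (hrange ▸ hT)
  exact (hc.isClosedEmbedding (T ∘L _).uniformContinuous).isClosedMap

theorem surjective_adjoint_continuousLinearEquiv [CompleteSpace F] (e : E ≃L[𝕜] F) :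
    Surjective ((e : E →L[𝕜] F)†) :=
  RightInverse.surjective (f := (e : E →L[𝕜] F)†) (g := (e.symm : F →L[𝕜] E)†) fun x => by
    rw [← comp_apply, ← adjoint_comp, e.coe_symm_comp_coe, adjoint_id, id_apply]

/-- `T` factors as the inclusion of its range, an isomorphism `(ker T)ᗮ ≃ range T` and the
projection onto `(ker T)ᗮ`; taking adjoints reverses this factorization. -/
theorem range_adjoint_of_isClosed_range [CompleteSpace F] {T : E →L[𝕜] F}
    (hT : IsClosed (Set.range T)) : Set.range (T†) = T.kerᗮ := by
  have hK : T.kerᗮᗮ ≤ T.ker := T.ker.orthogonal_orthogonal.le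
  set T₀ := T ∘L T.kerᗮ.subtypeL
  have hT₀ : IsClosed (Set.range T₀) := by rwa [range_comp_subtypeL_of_orthogonal_le_ker hK]
  have : CompleteSpace T₀.range := hT₀.completeSpace_coe
  set e := T₀.equivRange (injective_comp_subtypeL_orthogonal_ker T) hT₀
  have hfac : T = T₀.range.subtypeL ∘L (e : T.kerᗮ →L[𝕜] _) ∘L T.kerᗮ.orthogonalProjectionOnto :=
    (comp_starProjection_of_orthogonal_le_ker hK).symm
  have hP : Surjective T₀.range.orthogonalProjectionOnto := fun v =>
    ⟨v, orthogonalProjectionOnto_mem_subspace_eq_self v⟩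
  conv_lhs => rw [hfac]
  rw [adjoint_comp, adjoint_comp, adjoint_subtypeL, adjoint_orthogonalProjectionOnto, coe_comp, coe_comp, hP.range_comp, (surjective_adjoint_continuousLinearEquiv e).range_comp]
  exact Subtype.range_coe

theorem isClosed_range_adjoint [CompleteSpace F] {T : E →L[𝕜] F}
    (hT : IsClosed (Set.range T)) : IsClosed (Set.range (T†)) := by
  rw [range_adjoint_of_isClosed_range hT]
  exact T.ker.isClosed_orthogonal

theorem isClosed_range_of_isClosed_range_adjoint [CompleteSpace F] {T : E →L[𝕜] F}
    (hT : IsClosed (Set.range (T†))) : IsClosed (Set.range T) :=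
  T.adjoint_adjoint ▸ isClosed_range_adjoint hT

section LowerTriangular

variable {K : Submodule 𝕜 E} [CompleteSpace K] {T : E →L[𝕜] E}
  {T₁₁ : Kᗮ →L[𝕜] Kᗮ} {T₂₁ : Kᗮ →L[𝕜] K} {T₂₂ : K →L[𝕜] K}

theorem orthogonalProjectionOnto_adjoint_apply_of_comp_subtypeL
    (h₂ : T ∘L K.subtypeL = K.subtypeL ∘L T₂₂) (x : E) :
    K.orthogonalProjectionOnto ((T†) x) = (T₂₂†) (K.orthogonalProjectionOnto x) := by
  have := congrArg adjoint h₂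
  simp only [adjoint_comp, adjoint_subtypeL] at this
  exact DFunLike.congr_fun this x

theorem orthogonalProjectionOnto_orthogonal_adjoint_apply_of_comp_subtypeL
    (h₁ : T ∘L Kᗮ.subtypeL = Kᗮ.subtypeL ∘L T₁₁ + K.subtypeL ∘L T₂₁) (x : E) :
    Kᗮ.orthogonalProjectionOnto ((T†) x) =
      (T₁₁†) (Kᗮ.orthogonalProjectionOnto x) + (T₂₁†) (K.orthogonalProjectionOnto x) := by
  have := congrArg adjoint h₁
  simp only [map_add, adjoint_comp, adjoint_subtypeL] at this
  exact DFunLike.congr_fun this x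

theorem adjoint_apply_coe_orthogonal_of_lowerTriangular
    (h₁ : T ∘L Kᗮ.subtypeL = Kᗮ.subtypeL ∘L T₁₁ + K.subtypeL ∘L T₂₁)
    (h₂ : T ∘L K.subtypeL = K.subtypeL ∘L T₂₂) (w : Kᗮ) :
    (T†) w = (T₁₁†) w := by
  have hw : (T†) w ∈ Kᗮ := by
    rw [← orthogonalProjectionOnto_eq_zero_iff,
      orthogonalProjectionOnto_adjoint_apply_of_comp_subtypeL h₂,
      orthogonalProjectionOnto_apply_of_mem_orthogonal w.2, map_zero]
  suffices (⟨(T†) w, hw⟩ : Kᗮ) = (T₁₁†) w from congrArg Subtype.val this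
  rw [← orthogonalProjectionOnto_mem_subspace_eq_self ⟨(T†) w, hw⟩,
    orthogonalProjectionOnto_orthogonal_adjoint_apply_of_comp_subtypeL h₁,
    orthogonalProjectionOnto_mem_subspace_eq_self,
    orthogonalProjectionOnto_apply_of_mem_orthogonal w.2, map_zero, add_zero]

theorem range_adjoint_eq_preimage_range_adjoint_of_lowerTriangular
    (h₁ : T ∘L Kᗮ.subtypeL = Kᗮ.subtypeL ∘L T₁₁ + K.subtypeL ∘L T₂₁)
    (h₂ : T ∘L K.subtypeL = K.subtypeL ∘L T₂₂)
    (h : ∀ v ∈ (T₂₂†).ker, (T₂₁†) v ∈ (T₁₁†).range) :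
    Set.range (T₁₁†) = Kᗮ.subtypeL ⁻¹' Set.range (T†) := by
  ext u
  constructor
  · rintro ⟨w, rfl⟩
    exact ⟨w, adjoint_apply_coe_orthogonal_of_lowerTriangular h₁ h₂ w⟩
  · rintro ⟨x, hx⟩
    have hv : K.orthogonalProjectionOnto x ∈ (T₂₂†).ker := by
      rw [LinearMap.mem_ker, coe_coe, ← orthogonalProjectionOnto_adjoint_apply_of_comp_subtypeL h₂,
        hx]
      exact orthogonalProjectionOnto_apply_of_mem_orthogonal u.2
    obtain ⟨u', hu'⟩ := h _ hv
    refine ⟨Kᗮ.orthogonalProjectionOnto x + u', ?_⟩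
    rw [map_add, ← coe_coe (T₁₁†), hu', coe_coe,
      ← orthogonalProjectionOnto_orthogonal_adjoint_apply_of_comp_subtypeL h₁, hx]
    exact orthogonalProjectionOnto_mem_subspace_eq_self u

end LowerTriangular

end ContinuousLinearMap

theorem stmt4 {H : Type*} [NormedAddCommGroup H] [InnerProductSpace ℂ H] [CompleteSpace H]
    (A B : H →L[ℂ] H)
    (hAran : IsClosed (Set.range A)) (hBran : IsClosed (Set.range B))
    (B' : (LinearMap.ker (A : H →ₗ[ℂ] H))ᗮ →L[ℂ] (LinearMap.ker (A : H →ₗ[ℂ] H))ᗮ)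
    (Y : (LinearMap.ker (A : H →ₗ[ℂ] H))ᗮ →L[ℂ] LinearMap.ker (A : H →ₗ[ℂ] H))
    (Z : LinearMap.ker (A : H →ₗ[ℂ] H) →L[ℂ] LinearMap.ker (A : H →ₗ[ℂ] H))
    (hB'Y : ∀ x : (LinearMap.ker (A : H →ₗ[ℂ] H))ᗮ, B x = (B' x : H) + (Y x : H))
    (hZ : ∀ x : LinearMap.ker (A : H →ₗ[ℂ] H), (Z x : H) = B x)
    (hYZ : ∀ v ∈ LinearMap.ker (ContinuousLinearMap.adjoint Z).toLinearMap,
      ContinuousLinearMap.adjoint Y v ∈ LinearMap.range (ContinuousLinearMap.adjoint B').toLinearMap) :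
    IsClosed (Set.range (A ∘L B)) := by
  have h₁ : B ∘L A.kerᗮ.subtypeL = A.kerᗮ.subtypeL ∘L B' + A.ker.subtypeL ∘L Y := by
    ext x; simp [hB'Y]
  have h₂ : B ∘L A.ker.subtypeL = A.ker.subtypeL ∘L Z := by
    ext x; simp [hZ]
  have hB' : IsClosed (Set.range B') := by
    refine isClosed_range_of_isClosed_range_adjoint ?_
    rw [range_adjoint_eq_preimage_range_adjoint_of_lowerTriangular h₁ h₂ hYZ]
    exact (isClosed_range_adjoint hBran).preimage A.kerᗮ.subtypeL.continuous
  have hker : A.kerᗮᗮ ≤ (A ∘L B).ker := by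
    rw [A.ker.orthogonal_orthogonal]
    intro x hx
    show A (B x) = 0
    rw [← hZ ⟨x, hx⟩]
    exact (Z ⟨x, hx⟩).2
  have hcomp : (A ∘L B) ∘L A.kerᗮ.subtypeL = (A ∘L A.kerᗮ.subtypeL) ∘L B' := by
    ext x
    simp [hB'Y]
  rw [← range_comp_subtypeL_of_orthogonal_le_ker hker, hcomp, coe_comp, Set.range_comp]
  exact isClosedMap_comp_subtypeL_orthogonal_ker hAran _ hB'
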